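/- arXiv:0903.1689 — 2 statements merged into one kernel-verified Lean document; each statement's English description precedes it below -/
import Mathlib

section
/- For every integer k ≥ 0, the Laurent polynomial Y⁻¹t⁻¹·(I − Yt)·Q_{3k+2}(t)·Yt·(I − Xt) is twin. -/
/-- The image of (123) under the irreducible 3-dimensional integral representation of A₄. -/
def Xm : Matrix (Fin 3) (Fin 3) ℤ := !![-1, 1, 0; -1, 0, 0; -1, 0, 1]

/-- The image of (142) under the irreducible 3-dimensional integral representation of A₄. -/
def Ym : Matrix (Fin 3) (Fin 3) ℤ := !![0, 0, -1; 0, 1, -1; 1, 0, -1]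

/-- The inverse of `Xm`, which equals `Xm ^ 2`. -/
def Xinv : Matrix (Fin 3) (Fin 3) ℤ := Xm ^ 2

/-- The inverse of `Ym`, which equals `Ym ^ 2`. -/
def Yinv : Matrix (Fin 3) (Fin 3) ℤ := Ym ^ 2

open LaurentPolynomial Finset

/-- 3×3 integer matrices. -/
abbrev M3 : Type := Matrix (Fin 3) (Fin 3) ℤ

/-- Laurent polynomials in `t` with coefficients in `M3`. -/
abbrev L : Type := LaurentPolynomial M3

/-- A Laurent polynomial `f = ∑ d_j t^j` with 3×3 integer matrix coefficients is *twin* if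
`d_j = c_j I + c_j' (XYX)` for `j ≡ 0 (mod 3)`, `d_j = a_j (X+Y)` for `j ≡ 1 (mod 3)`,
`d_j = b_j (X⁻¹+Y⁻¹)` for `j ≡ 2 (mod 3)`, and `a_{3j+1} = b_{3j+2}` for all `j`. -/
def IsTwin (f : L) : Prop :=
  ∃ c c' a b : ℤ → ℤ,
    (∀ j : ℤ, j % 3 = 0 → AddMonoidAlgebra.coeff f j = c j • (1 : M3) + c' j • (Xm * Ym * Xm)) ∧
    (∀ j : ℤ, j % 3 = 1 → AddMonoidAlgebra.coeff f j = a j • (Xm + Ym)) ∧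
    (∀ j : ℤ, j % 3 = 2 → AddMonoidAlgebra.coeff f j = b j • (Xinv + Yinv)) ∧
    (∀ j : ℤ, a (3 * j + 1) = b (3 * j + 2))

/-- `Q m = ∑_{i=0}^m (YX)^i t^{2i}` for `m ≥ 0` and
`Q (-m) = ∑_{i=1}^m (X⁻¹Y⁻¹)^i t^{-2i}` for `m ≥ 1`. -/
noncomputable def Q (m : ℤ) : L :=
  if 0 ≤ m then ∑ i ∈ Finset.range (m.toNat + 1), C ((Ym * Xm) ^ i) * T (2 * (i : ℤ))
  else ∑ i ∈ Finset.range (-m).toNat, C ((Xinv * Yinv) ^ (i + 1)) * T (-(2 * ((i : ℤ) + 1)))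

/-!
Since `(YX)³ = I`, the sum `Q_{3k+2}` is `(1 + t⁶ + ⋯ + t^{6k}) Q₂`, and powers of `t` are
central, so the polynomial in question is `∑_{j ≤ k} t^{6j} P₀` with `P₀` its value at `k = 0`.
Twin polynomials form an additive subgroup stable under multiplication by `t^{3m}`, and a direct
computation gives `P₀ = 1 + t⁶ - 2 XYX t³ - (1 + t³)((X + Y) t + (X⁻¹ + Y⁻¹) t²)`, a combination
of the twin polynomials `1`, `XYX` and `(X + Y) t + (X⁻¹ + Y⁻¹) t²`.
-/

namespace LaurentPolynomial

variable {R : Type*} [Semiring R]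

lemma coeff_C_mul_T (a : R) (n j : ℤ) :
    AddMonoidAlgebra.coeff (C a * T n : R[T;T⁻¹]) j = if n = j then a else 0 := by
  rw [← single_eq_C_mul_T]
  exact Finsupp.single_apply

lemma coeff_T_mul (n : ℤ) (f : R[T;T⁻¹]) (j : ℤ) :
    AddMonoidAlgebra.coeff (T n * f) j = AddMonoidAlgebra.coeff f (j - n) := by
  rw [T_mul]
  simpa [sub_eq_add_neg] using AddMonoidAlgebra.coeff_mul_single_apply f (1 : R) n j

lemma C_mul_T_mul_C_mul_T (a b : R) (m n : ℤ) :
    C a * T m * (C b * T n) = C (a * b) * T (m + n) := by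
  rw [mul_assoc, ← mul_assoc (T m), T_mul m (C b), mul_assoc, ← T_add, ← mul_assoc, ← map_mul]

lemma sum_C_pow_mul_T_range_three_mul {A : R} (hA : A ^ 3 = 1) (d : ℤ) (k : ℕ) :
    ∑ i ∈ range (3 * k), C (A ^ i) * T (d * i) =
      (∑ j ∈ range k, T (3 * d * j)) * ∑ i ∈ range 3, C (A ^ i) * T (d * i) := by
  induction k with
  | zero => simp
  | succ k ih =>
    rw [mul_add_one, sum_range_add, ih,
      sum_range_succ (fun j : ℕ => (T (3 * d * j) : R[T;T⁻¹])) k, add_mul]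
    congr 1
    rw [mul_sum]
    refine sum_congr rfl fun i _ => ?_
    rw [pow_add, pow_mul, hA, one_pow, one_mul, (commute_T _ _).left_comm, ← T_add]
    push_cast
    ring_nf

end LaurentPolynomial

def twinSubgroup : AddSubgroup L where
  carrier := {f | IsTwin f}
  zero_mem' := ⟨0, 0, 0, 0, fun _ _ => by simp, fun _ _ => by simp, fun _ _ => by simp,
    fun _ => rfl⟩
  add_mem' := by
    rintro f g ⟨c₁, c₁', a₁, b₁, hf₀, hf₁, hf₂, hf⟩ ⟨c₂, c₂', a₂, b₂, hg₀, hg₁, hg₂, hg⟩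
    refine ⟨c₁ + c₂, c₁' + c₂', a₁ + a₂, b₁ + b₂, fun j hj => ?_, fun j hj => ?_,
      fun j hj => ?_, fun j => ?_⟩
    · simp only [AddMonoidAlgebra.coeff_add, Finsupp.add_apply, hf₀ j hj, hg₀ j hj,
        Pi.add_apply, add_smul]
      abel
    · simp only [AddMonoidAlgebra.coeff_add, Finsupp.add_apply, hf₁ j hj, hg₁ j hj,
        Pi.add_apply, add_smul]
    · simp only [AddMonoidAlgebra.coeff_add, Finsupp.add_apply, hf₂ j hj, hg₂ j hj,
        Pi.add_apply, add_smul]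
    · simp only [Pi.add_apply, hf j, hg j]
  neg_mem' := by
    rintro f ⟨c, c', a, b, h₀, h₁, h₂, h⟩
    refine ⟨-c, -c', -a, -b, fun j hj => ?_, fun j hj => ?_, fun j hj => ?_, fun j => ?_⟩
    · simp only [AddMonoidAlgebra.coeff_neg, Finsupp.neg_apply, h₀ j hj, Pi.neg_apply, neg_smul]
      abel
    · simp only [AddMonoidAlgebra.coeff_neg, Finsupp.neg_apply, h₁ j hj, Pi.neg_apply, neg_smul]
    · simp only [AddMonoidAlgebra.coeff_neg, Finsupp.neg_apply, h₂ j hj, Pi.neg_apply, neg_smul]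
    · simp only [Pi.neg_apply, h j]

lemma mem_twinSubgroup {f : L} : f ∈ twinSubgroup ↔ IsTwin f := Iff.rfl

lemma T_three_mul_mul_mem_twinSubgroup (m : ℤ) {f : L} (hf : f ∈ twinSubgroup) :
    T (3 * m) * f ∈ twinSubgroup := by
  obtain ⟨c, c', a, b, h₀, h₁, h₂, h⟩ := hf
  refine ⟨fun j => c (j - 3 * m), fun j => c' (j - 3 * m), fun j => a (j - 3 * m),
    fun j => b (j - 3 * m), fun j hj => ?_, fun j hj => ?_, fun j hj => ?_, fun j => ?_⟩
  · rw [coeff_T_mul]; exact h₀ _ (by omega)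
  · rw [coeff_T_mul]; exact h₁ _ (by omega)
  · rw [coeff_T_mul]; exact h₂ _ (by omega)
  · simpa only [show 3 * j + 1 - 3 * m = 3 * (j - m) + 1 by ring,
      show 3 * j + 2 - 3 * m = 3 * (j - m) + 2 by ring] using h (j - m)

lemma C_mem_twinSubgroup (c c' : ℤ) : C (c • 1 + c' • (Xm * Ym * Xm)) ∈ twinSubgroup := by
  refine ⟨fun j => if j = 0 then c else 0, fun j => if j = 0 then c' else 0, 0, 0,
    fun j _ => ?_, fun j hj => ?_, fun j hj => ?_, fun _ => rfl⟩
  · rw [C_apply]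
    by_cases hj : j = 0 <;> simp only [hj, ↓reduceIte, zero_smul, add_zero]
  · rw [C_apply, if_neg (by omega)]; simp
  · rw [C_apply, if_neg (by omega)]; simp

lemma C_mul_T_one_add_C_mul_T_two_mem_twinSubgroup :
    C (Xm + Ym) * T 1 + C (Xinv + Yinv) * T 2 ∈ twinSubgroup := by
  refine ⟨0, 0, fun j => if j = 1 then 1 else 0, fun j => if j = 2 then 1 else 0,
    fun j hj => ?_, fun j hj => ?_, fun j hj => ?_, fun j => ?_⟩
  all_goals simp only [AddMonoidAlgebra.coeff_add, Finsupp.add_apply, coeff_C_mul_T]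
  · rw [if_neg (by omega), if_neg (by omega)]; simp
  · rw [if_neg (show (2 : ℤ) ≠ j by omega)]
    by_cases hj : j = 1 <;> simp [hj, Ne.symm]
  · rw [if_neg (show (1 : ℤ) ≠ j by omega)]
    by_cases hj : j = 2 <;> simp [hj, Ne.symm]
  · simp only [show 3 * j + 1 = 1 ↔ j = 0 by omega, show 3 * j + 2 = 2 ↔ j = 0 by omega]

lemma Q_two : Q 2 = C 1 * T 0 + C (Ym * Xm) * T 2 + C ((Ym * Xm) ^ 2) * T 4 := by
  simp [Q, Finset.sum_range_succ]

lemma Q_three_mul_add_two (k : ℕ) :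
    Q (3 * k + 2) = (∑ j ∈ range (k + 1), T (6 * j)) * Q 2 := by
  have hQ (n : ℕ) : Q n = ∑ i ∈ range (n + 1), C ((Ym * Xm) ^ i) * T (2 * i) := by
    simp [Q]
  have h := sum_C_pow_mul_T_range_three_mul (A := Ym * Xm) (by decide) 2 (k + 1)
  rw [show (3 * k + 2 : ℤ) = (3 * k + 2 : ℕ) by push_cast; ring, show (2 : ℤ) = (2 : ℕ) by rfl,
    hQ, hQ, show 3 * k + 2 + 1 = 3 * (k + 1) by ring, h]
  norm_num

lemma sandwich_Q_two_eq :
    C Yinv * T (-1) * (1 - C Ym * T 1) * Q 2 * (C Ym * T 1) * (1 - C Xm * T 1) =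
      1 + T 6 - C (2 • (Xm * Ym * Xm)) * T 3 -
        (C (Xm + Ym) * T 1 + C (Xinv + Yinv) * T 2) * (1 + T 3) := by
  rw [Q_two, show (1 : L) = C 1 * T 0 by simp]
  simp only [mul_sub, sub_mul, mul_add, add_mul, C_mul_T_mul_C_mul_T, mul_T_assoc]
  -- Coefficientwise this is a list of identities between explicit integer matrices.
  refine LaurentPolynomial.ext fun j => ?_
  simp only [AddMonoidAlgebra.coeff_add, AddMonoidAlgebra.coeff_sub, Finsupp.add_apply,
    Finsupp.sub_apply, coeff_C_mul_T, T_apply]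
  norm_num only [mul_one, one_mul]
  by_cases hj : 0 ≤ j ∧ j ≤ 6
  · obtain ⟨hj0, hj6⟩ := hj
    interval_cases j <;> simp <;> decide
  · simp (disch := omega) only [if_neg, sub_zero, add_zero]

lemma sandwich_Q_two_mem_twinSubgroup :
    C Yinv * T (-1) * (1 - C Ym * T 1) * Q 2 * (C Ym * T 1) * (1 - C Xm * T 1) ∈
      twinSubgroup := by
  have h1 : (1 : L) ∈ twinSubgroup := by simpa using C_mem_twinSubgroup 1 0
  have hpair := C_mul_T_one_add_C_mul_T_two_mem_twinSubgroup
  have hT6 : T 6 ∈ twinSubgroup := by simpa using T_three_mul_mul_mem_twinSubgroup 2 h1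
  have hXYX : C (2 • (Xm * Ym * Xm)) * T 3 ∈ twinSubgroup := by
    rw [← T_mul 3]
    simpa using T_three_mul_mul_mem_twinSubgroup 1 (C_mem_twinSubgroup 0 2)
  have hpair3 : (C (Xm + Ym) * T 1 + C (Xinv + Yinv) * T 2) * (1 + T 3) ∈ twinSubgroup := by
    rw [mul_one_add, ← T_mul 3]
    exact add_mem hpair (by simpa using T_three_mul_mul_mem_twinSubgroup 1 hpair)
  rw [sandwich_Q_two_eq]
  exact sub_mem (sub_mem (add_mem h1 hT6) hXYX) hpair3

/-- For every `k ≥ 0`, `Y⁻¹t⁻¹·(I − Yt)·Q_{3k+2}(t)·Yt·(I − Xt)` is twin. -/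
theorem stmt_10 (k : ℕ) :
    IsTwin (C Yinv * T (-1) * (1 - C Ym * T 1) * Q (3 * k + 2) * (C Ym * T 1) *
      (1 - C Xm * T 1)) := by
  have hcentral : ∀ f : L, Commute (∑ j ∈ range (k + 1), T (6 * j)) f :=
    fun f => Commute.sum_left _ _ _ fun j _ => commute_T _ f
  rw [← mem_twinSubgroup, Q_three_mul_add_two, ← (hcentral _).left_comm, mul_assoc, mul_assoc,
    ← mul_assoc _ (C Ym * T 1), sum_mul]
  refine sum_mem fun j _ => ?_
  rw [show (6 * j : ℤ) = 3 * (2 * j) by ring]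
  exact T_three_mul_mul_mem_twinSubgroup _ sandwich_Q_two_mem_twinSubgroup
end

section
/- Let s ≥ 1 and q ≥ 2 be integers, let m₁, …, m_{q−1} be integers, and let f₁, …, f_{q−1} be twin Laurent polynomials. Then the Laurent polynomial ∑_{j=1}^{q−1} m_j·{Y⁻¹t⁻¹·(I − Yt)·Q_{3s−1}(t)·Yt·(Xt − I)}·f_j + t^{6s}·f_{q−1} − ∑_{j=1}^{s} XYX·t^{6s−6j+3} + ∑_{j=1}^{s} I·t^{6s−6j} is twin. -/
open LaurentPolynomial Finset

/-!
Twin polynomials are exactly the finite sums of blocks `t^{3k} (c I + c' V + a W)` with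
`V = XYX` and `W = (X + Y) t + (X⁻¹ + Y⁻¹) t²`; the condition `a_{3j+1} = b_{3j+2}` is what ties
the two halves of `W` together. The matrix identities `V² = I`, `VW = WV = -W` and
`W² = t³ (2I - 2V)` show that a product of two blocks is a sum of blocks, so the twin polynomials
form a subring of `L`. Since `(YX)³ = I`, `Q_{3s-1} = (∑_{k<s} t^{6k}) Q₂` with a central twin
first factor, and `Y⁻¹t⁻¹ (I - Yt) Q₂ Yt (Xt - I) = -I + W + t³ (2V + W) - t⁶` is computed directly.
Every summand of the polynomial in question is then built from twin polynomials by ring operations.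
-/

lemma coeff_C_mul_T (M : M3) (e n : ℤ) : (C M * T e : L).coeff n = if e = n then M else 0 := by
  rw [← single_eq_C_mul_T, AddMonoidAlgebra.coeff_single, Finsupp.single_apply]

lemma C_mul_T_mul_C_mul_T (M N : M3) (a b : ℤ) :
    C M * T a * (C N * T b) = C (M * N) * T (a + b) := by
  simp only [← single_eq_C_mul_T, AddMonoidAlgebra.single_mul_single]

lemma coeff_zsmul (z : ℤ) (f : L) (n : ℤ) : (z • f).coeff n = z • f.coeff n := rfl

lemma IsTwin.add {f g : L} (hf : IsTwin f) (hg : IsTwin g) : IsTwin (f + g) := by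
  obtain ⟨c, c', a, b, h0, h1, h2, hab⟩ := hf
  obtain ⟨d, d', e, e', k0, k1, k2, kab⟩ := hg
  refine ⟨c + d, c' + d', a + e, b + e', fun j hj => ?_, fun j hj => ?_, fun j hj => ?_,
    fun j => by simp [hab j, kab j]⟩ <;>
  simp only [AddMonoidAlgebra.coeff_add, Finsupp.add_apply, Pi.add_apply, add_smul,
    add_add_add_comm, *]

lemma IsTwin.neg {f : L} (hf : IsTwin f) : IsTwin (-f) := by
  obtain ⟨c, c', a, b, h0, h1, h2, hab⟩ := hf
  refine ⟨-c, -c', -a, -b, fun j hj => ?_, fun j hj => ?_, fun j hj => ?_,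
    fun j => by simp [hab j]⟩ <;>
  simp only [AddMonoidAlgebra.coeff_neg, Finsupp.neg_apply, Pi.neg_apply, neg_smul, neg_add, *]

def twinAddSubgroup : AddSubgroup L where
  carrier := {f | IsTwin f}
  add_mem' := IsTwin.add
  zero_mem' := ⟨0, 0, 0, 0, by simp, by simp, by simp, by simp⟩
  neg_mem' := IsTwin.neg

noncomputable def twinV : L := C (Xm * Ym * Xm)

noncomputable def twinW : L := C (Xm + Ym) * T 1 + C (Xinv + Yinv) * T 2

noncomputable def twinBlock (k c c' a : ℤ) : L := T (3 * k) * (c • 1 + c' • twinV + a • twinW)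

lemma coeff_twinBlock (k c c' a n : ℤ) : (twinBlock k c c' a).coeff n =
    if n = 3 * k then c • 1 + c' • (Xm * Ym * Xm) else
    if n = 3 * k + 1 then a • (Xm + Ym) else
    if n = 3 * k + 2 then a • (Xinv + Yinv) else 0 := by
  simp only [twinBlock, twinV, twinW, mul_add, mul_smul_comm, mul_one, ← mul_assoc, T_mul,
    mul_T_assoc]
  simp only [AddMonoidAlgebra.coeff_add, Finsupp.add_apply, coeff_zsmul, T_apply, coeff_C_mul_T]
  split_ifs <;> first | omega | simp

lemma isTwin_twinBlock (k c c' a : ℤ) : IsTwin (twinBlock k c c' a) := by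
  refine ⟨fun n => if n = 3 * k then c else 0, fun n => if n = 3 * k then c' else 0,
    fun n => if n = 3 * k + 1 then a else 0, fun n => if n = 3 * k + 2 then a else 0,
    fun n hn => ?_, fun n hn => ?_, fun n hn => ?_, fun j => ?_⟩ <;>
  simp only [coeff_twinBlock] <;> split_ifs <;> first | omega | simp

lemma IsTwin.eq_sum_twinBlock {f : L} (hf : IsTwin f) :
    ∃ (S : Finset ℤ) (c c' a : ℤ → ℤ), f = ∑ k ∈ S, twinBlock k (c k) (c' k) (a k) := by
  obtain ⟨c, c', a, b, h0, h1, h2, hab⟩ := hf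
  refine ⟨f.coeff.support.image (· / 3), fun k => c (3 * k), fun k => c' (3 * k),
    fun k => a (3 * k + 1), AddMonoidAlgebra.ext (Finsupp.ext fun n => ?_)⟩
  have hmain : (twinBlock (n / 3) (c (3 * (n / 3))) (c' (3 * (n / 3)))
      (a (3 * (n / 3) + 1))).coeff n = f.coeff n := by
    rw [coeff_twinBlock]
    rcases (by omega : n % 3 = 0 ∨ n % 3 = 1 ∨ n % 3 = 2) with h | h | h
    · rw [if_pos (by omega), h0 n h, show 3 * (n / 3) = n by omega]
    · rw [if_neg (by omega), if_pos (by omega), h1 n h, show 3 * (n / 3) + 1 = n by omega]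
    · rw [if_neg (by omega), if_neg (by omega), if_pos (by omega), h2 n h, hab,
        show 3 * (n / 3) + 2 = n by omega]
  rw [AddMonoidAlgebra.coeff_sum, Finset.sum_apply', Finset.sum_eq_single (n / 3), hmain]
  · intro k _ hk
    rw [coeff_twinBlock]
    split_ifs <;> first | omega | rfl
  · intro hn
    rw [hmain]
    by_contra h
    exact hn (Finset.mem_image_of_mem _ (Finsupp.mem_support_iff.mpr h))

lemma twinV_eq : twinV = C (Xm * Ym * Xm) * T 0 := by
  rw [T_zero, mul_one, twinV]

lemma twinV_mul_twinV : twinV * twinV = 1 := by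
  rw [twinV, ← map_mul, show Xm * Ym * Xm * (Xm * Ym * Xm) = 1 by decide, map_one]

lemma twinV_mul_twinW : twinV * twinW = -twinW := by
  rw [twinV_eq, twinW, mul_add, C_mul_T_mul_C_mul_T, C_mul_T_mul_C_mul_T, zero_add, zero_add,
    show Xm * Ym * Xm * (Xm + Ym) = -(Xm + Ym) by decide,
    show Xm * Ym * Xm * (Xinv + Yinv) = -(Xinv + Yinv) by decide,
    map_neg, map_neg, neg_mul (C (Xm + Ym)), neg_mul (C (Xinv + Yinv)), neg_add]

lemma twinW_mul_twinV : twinW * twinV = -twinW := by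
  rw [twinV_eq, twinW, add_mul, C_mul_T_mul_C_mul_T, C_mul_T_mul_C_mul_T, add_zero, add_zero,
    show (Xm + Ym) * (Xm * Ym * Xm) = -(Xm + Ym) by decide,
    show (Xinv + Yinv) * (Xm * Ym * Xm) = -(Xinv + Yinv) by decide,
    map_neg, map_neg, neg_mul (C (Xm + Ym)), neg_mul (C (Xinv + Yinv)), neg_add]

lemma twinW_mul_twinW : twinW * twinW = T 3 * ((2 : ℤ) • 1 - (2 : ℤ) • twinV) := by
  rw [twinW, add_mul, mul_add, mul_add, C_mul_T_mul_C_mul_T, C_mul_T_mul_C_mul_T,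
    C_mul_T_mul_C_mul_T, C_mul_T_mul_C_mul_T, show (Xm + Ym) * (Xm + Ym) = 0 by decide,
    show (Xinv + Yinv) * (Xinv + Yinv) = 0 by decide, map_zero, zero_mul, zero_mul, zero_add,
    add_zero, show (1 : ℤ) + 2 = 3 by norm_num, show (2 : ℤ) + 1 = 3 by norm_num, ← add_mul,
    ← map_add, show (Xm + Ym) * (Xinv + Yinv) + (Xinv + Yinv) * (Xm + Ym) =
      (2 : ℤ) • 1 - (2 : ℤ) • (Xm * Ym * Xm) by decide,
    map_sub, map_zsmul, map_zsmul, map_one, T_mul, twinV]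

lemma twinBlock_mul_twinBlock (k c c' a l d d' e : ℤ) :
    twinBlock k c c' a * twinBlock l d d' e =
      twinBlock (k + l) (c * d + c' * d') (c * d' + c' * d) (c * e - c' * e + a * d - a * d') +
        twinBlock (k + l + 1) (2 * a * e) (-(2 * a * e)) 0 := by
  have hunit : (c • 1 + c' • twinV + a • twinW) * (d • 1 + d' • twinV + e • twinW) =
      ((c * d + c' * d') • 1 + (c * d' + c' * d) • twinV +
        (c * e - c' * e + a * d - a * d') • twinW) +
        T 3 * ((2 * a * e) • 1 + (-(2 * a * e)) • twinV + (0 : ℤ) • twinW) := by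
    simp only [add_mul, mul_add, smul_mul_assoc, one_mul, mul_one, twinV_mul_twinV,
      twinV_mul_twinW, twinW_mul_twinV, twinW_mul_twinW, mul_smul_comm, mul_sub]
    module
  have hT : T (3 * (k + l + 1)) = (T (3 * (k + l)) : L) * T 3 := by rw [← T_add, mul_add_one]
  rw [twinBlock, twinBlock, twinBlock, twinBlock, (commute_T _ _).symm.mul_mul_mul_comm, ← T_add,
    ← mul_add, hunit, hT, mul_assoc (T (3 * (k + l))), ← mul_add (T (3 * (k + l)))]

lemma IsTwin.mul {f g : L} (hf : IsTwin f) (hg : IsTwin g) : IsTwin (f * g) := by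
  obtain ⟨S, c, c', a, rfl⟩ := hf.eq_sum_twinBlock
  obtain ⟨S', d, d', e, rfl⟩ := hg.eq_sum_twinBlock
  rw [Finset.sum_mul_sum]
  refine twinAddSubgroup.sum_mem fun k _ => twinAddSubgroup.sum_mem fun l _ => ?_
  rw [twinBlock_mul_twinBlock]
  exact (isTwin_twinBlock ..).add (isTwin_twinBlock ..)

def twinSubring : Subring L :=
  { twinAddSubgroup with
    one_mem' := show IsTwin 1 by
      simpa only [twinBlock, one_smul, zero_smul, add_zero, mul_zero, T_zero, mul_one]
        using isTwin_twinBlock 0 1 0 0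
    mul_mem' := IsTwin.mul }

lemma mem_twinSubring {f : L} : f ∈ twinSubring ↔ IsTwin f := Iff.rfl

lemma T_three_mul_mem (k : ℤ) : T (3 * k) ∈ twinSubring :=
  mem_twinSubring.2 <| by
    simpa only [twinBlock, one_smul, zero_smul, add_zero, mul_one]
      using isTwin_twinBlock k 1 0 0

lemma C_XYX_mul_T_three_mul_mem (k : ℤ) : C (Xm * Ym * Xm) * T (3 * k) ∈ twinSubring :=
  mem_twinSubring.2 <| by
    simpa only [twinBlock, twinV, one_smul, zero_smul, add_zero, zero_add, T_mul]
      using isTwin_twinBlock k 0 1 0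

lemma Q_natCast (n : ℕ) : Q n = ∑ i ∈ range (n + 1), C ((Ym * Xm) ^ i) * T (2 * (i : ℤ)) := by
  rw [Q, if_pos (Int.natCast_nonneg n), Int.toNat_natCast]

lemma kernel_two_eq :
    C Yinv * T (-1) * (1 - C Ym * T 1) * Q 2 * (C Ym * T 1) * (C Xm * T 1 - 1) =
      twinBlock 0 (-1) 0 1 + twinBlock 1 0 2 1 + twinBlock 2 (-1) 0 0 := by
  rw [show Q 2 = _ from Q_natCast 2]
  refine AddMonoidAlgebra.ext (Finsupp.ext fun n => ?_)
  simp only [Finset.sum_range_succ, Finset.sum_range_zero, zero_add, mul_add, add_mul, mul_sub,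
    sub_mul, mul_one, C_mul_T_mul_C_mul_T, AddMonoidAlgebra.coeff_add,
    AddMonoidAlgebra.coeff_sub, Finsupp.add_apply, Finsupp.sub_apply, coeff_C_mul_T,
    coeff_twinBlock]
  by_cases hn : 0 ≤ n ∧ n ≤ 6
  · obtain ⟨h0, h6⟩ := hn
    interval_cases n <;> decide
  · simp (disch := omega) only [if_neg]
    simp

lemma sum_range_three_mul_YX_pow (s : ℕ) :
    ∑ i ∈ range (3 * s), C ((Ym * Xm) ^ i) * T (2 * (i : ℤ)) =
      (∑ k ∈ range s, T (6 * (k : ℤ))) * ∑ i ∈ range 3, C ((Ym * Xm) ^ i) * T (2 * (i : ℤ)) := by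
  induction s with
  | zero => simp
  | succ s ih =>
    have hshift (i : ℕ) : C ((Ym * Xm) ^ (3 * s + i)) * T (2 * ((3 * s + i : ℕ) : ℤ)) =
        T (6 * (s : ℤ)) * (C ((Ym * Xm) ^ i) * T (2 * (i : ℤ))) := by
      rw [pow_add, pow_mul, show (Ym * Xm) ^ 3 = 1 by decide, one_pow, one_mul, ← mul_assoc,
        T_mul, mul_T_assoc]
      congr 2
      push_cast
      ring
    rw [Nat.mul_succ, Finset.sum_range_add, ih, Finset.sum_congr rfl fun i _ => hshift i,
      ← Finset.mul_sum, Finset.sum_range_succ (fun k : ℕ => (T (6 * (k : ℤ)) : L)), add_mul]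

lemma Q_three_mul_sub_one (s : ℕ) (hs : 1 ≤ s) :
    Q (3 * (s : ℤ) - 1) = (∑ k ∈ range s, T (6 * (k : ℤ))) * Q 2 := by
  rw [show 3 * (s : ℤ) - 1 = ((3 * (s - 1) + 2 : ℕ) : ℤ) by omega, Q_natCast,
    show 3 * (s - 1) + 2 + 1 = 3 * s by omega, sum_range_three_mul_YX_pow, ← Q_natCast]
  rfl

lemma kernel_mem_twinSubring (s : ℕ) (hs : 1 ≤ s) :
    C Yinv * T (-1) * (1 - C Ym * T 1) * Q (3 * (s : ℤ) - 1) * (C Ym * T 1) * (C Xm * T 1 - 1) ∈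
      twinSubring := by
  have hz : (∑ k ∈ range s, T (6 * (k : ℤ)) : L) ∈ twinSubring := sum_mem fun k _ => by
    simpa only [← mul_assoc, show (3 : ℤ) * 2 = 6 by norm_num] using T_three_mul_mem (2 * k)
  have hcentral : Commute (C Yinv * T (-1) * (1 - C Ym * T 1)) (∑ k ∈ range s, T (6 * (k : ℤ))) :=
    Commute.sum_right _ _ _ fun k _ => (commute_T _ _).symm
  rw [Q_three_mul_sub_one s hs, hcentral.left_comm, mul_assoc _ _ (C Ym * T 1),
    mul_assoc _ _ (C Xm * T 1 - 1), kernel_two_eq]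
  exact mul_mem hz (add_mem (add_mem (isTwin_twinBlock ..) (isTwin_twinBlock ..))
    (isTwin_twinBlock ..))

/-- For integers `s ≥ 1`, `q ≥ 2`, integers `m₁, …, m_{q−1}` and twin Laurent polynomials
`f₁, …, f_{q−1}`, the Laurent polynomial
`∑_{j=1}^{q−1} m_j·{Y⁻¹t⁻¹·(I − Yt)·Q_{3s−1}(t)·Yt·(Xt − I)}·f_j + t^{6s}·f_{q−1}
  − ∑_{j=1}^{s} XYX·t^{6s−6j+3} + ∑_{j=1}^{s} I·t^{6s−6j}` is twin. -/
theorem stmt_17 (s q : ℕ) (hs : 1 ≤ s) (hq : 2 ≤ q) (m : ℕ → ℤ) (f : ℕ → L)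
    (hf : ∀ j, 1 ≤ j → j ≤ q - 1 → IsTwin (f j)) :
    IsTwin (∑ j ∈ Finset.Icc 1 (q - 1),
        m j • (C Yinv * T (-1) * (1 - C Ym * T 1) * Q (3 * (s : ℤ) - 1) * (C Ym * T 1) *
          (C Xm * T 1 - 1) * f j)
      + T (6 * s) * f (q - 1)
      - ∑ j ∈ Finset.Icc 1 s, C (Xm * Ym * Xm) * T (6 * (s : ℤ) - 6 * j + 3)
      + ∑ j ∈ Finset.Icc 1 s, T (6 * (s : ℤ) - 6 * j)) := by
  have hf' (j : ℕ) (hj : j ∈ Finset.Icc 1 (q - 1)) : f j ∈ twinSubring :=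
    hf j (Finset.mem_Icc.1 hj).1 (Finset.mem_Icc.1 hj).2
  refine mem_twinSubring.1 (add_mem (sub_mem (add_mem ?_ ?_) ?_) ?_)
  · exact sum_mem fun j hj => zsmul_mem (mul_mem (kernel_mem_twinSubring s hs) (hf' j hj)) _
  · refine mul_mem ?_ (hf' (q - 1) (Finset.mem_Icc.2 ⟨by omega, le_rfl⟩))
    convert T_three_mul_mem (2 * s) using 2
    ring
  · refine sum_mem fun j _ => ?_
    convert C_XYX_mul_T_three_mul_mem (2 * s - 2 * j + 1) using 3
    ring
  · refine sum_mem fun j _ => ?_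
    convert T_three_mul_mem (2 * s - 2 * j) using 2
    ring
end
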